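/- Let y = Φ x_S + e' where supp(x_S) ⊆ S with |S| = s, and let z_p minimize ‖y − Φz‖₂ over z with supp(z) ⊆ T where |T| = t. If the RIP constants satisfy δ_{s+t} < 1, then ‖(x_S − z_p)_T‖₂ ≤ δ_{s+t}·‖x_S − z_p‖₂ + √(1+δ_t)·‖e'‖₂. -/

import Mathlib

open Finset Matrix

noncomputable def enorm {n : ℕ} (x : Fin n → ℝ) : ℝ := Real.sqrt (∑ i, (x i)^2)

def restrict {n : ℕ} (U : Finset (Fin n)) (x : Fin n → ℝ) : Fin n → ℝ :=
  fun i => if i ∈ U then x i else 0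

def sparse {n : ℕ} (s : ℕ) (x : Fin n → ℝ) : Prop :=
  ∃ S : Finset (Fin n), S.card ≤ s ∧ ∀ i ∉ S, x i = 0

noncomputable def supp {n : ℕ} (x : Fin n → ℝ) : Finset (Fin n) := Finset.univ.filter (fun i => x i ≠ 0)

def RIP {m N : ℕ} (Φ : Matrix (Fin m) (Fin N) ℝ) (s : ℕ) (δ : ℝ) : Prop :=
  ∀ x : Fin N → ℝ, sparse s x →
    (1 - δ) * (_root_.enorm x)^2 ≤ (_root_.enorm (Φ.mulVec x))^2 ∧
    (_root_.enorm (Φ.mulVec x))^2 ≤ (1 + δ) * (_root_.enorm x)^2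

/-! Put `w = x_S - z_p` and `v = w_T`. As `v` is supported on `T`, optimality of `z_p` makes the
residual `y - Φ z_p = Φ w + e'` orthogonal to `Φ v`. Hence
`‖v‖² = ⟨v, w⟩ = (⟨v, w⟩ - ⟨Φ v, Φ w⟩) - ⟨Φ v, e'⟩`; the RIP of order `s + t` bounds the first
term by `δ_{s+t} ‖v‖ ‖w‖` (polarization, both vectors live on `S ∪ T`) and the RIP of order `t`
bounds `‖Φ v‖ ≤ √(1 + δ_t) ‖v‖` in the second. -/

lemma enorm_nonneg {n : ℕ} (x : Fin n → ℝ) : 0 ≤ _root_.enorm x := Real.sqrt_nonneg _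

lemma enorm_sq_eq_dotProduct_self {n : ℕ} (x : Fin n → ℝ) : _root_.enorm x ^ 2 = x ⬝ᵥ x := by
  rw [_root_.enorm, Real.sq_sqrt (by positivity)]
  simp only [dotProduct, sq]

lemma enorm_pos_of_ne_zero {n : ℕ} {x : Fin n → ℝ} (hx : x ≠ 0) : 0 < _root_.enorm x := by
  obtain ⟨j, hj⟩ := Function.ne_iff.mp hx
  rw [_root_.enorm, Real.sqrt_pos]
  exact Finset.sum_pos' (fun i _ => sq_nonneg _) ⟨j, Finset.mem_univ j, pow_two_pos_of_ne_zero hj⟩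

lemma abs_dotProduct_le_enorm_mul_enorm {n : ℕ} (a b : Fin n → ℝ) :
    |a ⬝ᵥ b| ≤ _root_.enorm a * _root_.enorm b := by
  rw [_root_.enorm, _root_.enorm, ← Real.sqrt_mul (by positivity), ← Real.sqrt_sq_eq_abs]
  exact Real.sqrt_le_sqrt (Finset.sum_mul_sq_le_sq_mul_sq _ a b)

lemma restrict_dotProduct_restrict {n : ℕ} (U : Finset (Fin n)) (x : Fin n → ℝ) :
    _root_.restrict U x ⬝ᵥ _root_.restrict U x = _root_.restrict U x ⬝ᵥ x := by
  refine Finset.sum_congr rfl fun i _ => ?_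
  by_cases hi : i ∈ U <;> simp [_root_.restrict, hi]

lemma dotProduct_eq_zero_of_forall_enorm_le {n : ℕ} {r u : Fin n → ℝ}
    (h : ∀ ε : ℝ, _root_.enorm r ≤ _root_.enorm (r - ε • u)) : u ⬝ᵥ r = 0 := by
  -- `ε ↦ ‖r - ε u‖² - ‖r‖²` is a nonnegative quadratic, so its discriminant `4 (u ⬝ᵥ r)²` is `≤ 0`
  have hquad : ∀ ε : ℝ, 0 ≤ (u ⬝ᵥ u) * (ε * ε) + (-2 * (u ⬝ᵥ r)) * ε + 0 := by
    intro ε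
    have hsq := pow_le_pow_left₀ (enorm_nonneg r) (h ε) 2
    simp only [enorm_sq_eq_dotProduct_self, dotProduct_sub, sub_dotProduct, dotProduct_smul,
      smul_dotProduct, smul_eq_mul, dotProduct_comm r u] at hsq
    linarith
  have := discrim_le_zero hquad
  rw [discrim] at this
  nlinarith [sq_nonneg (u ⬝ᵥ r)]

namespace RIP

variable {m N k : ℕ} {Φ : Matrix (Fin m) (Fin N) ℝ} {δ : ℝ}

lemma abs_dotProduct_mulVec_self_sub_le (h : RIP Φ k δ) {x : Fin N → ℝ} (hx : sparse k x) :
    |Φ *ᵥ x ⬝ᵥ Φ *ᵥ x - x ⬝ᵥ x| ≤ δ * (x ⬝ᵥ x) := by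
  obtain ⟨hlow, hup⟩ := h x hx
  rw [enorm_sq_eq_dotProduct_self, enorm_sq_eq_dotProduct_self] at hlow hup
  exact abs_le.mpr ⟨by linarith, by linarith⟩

lemma mul_enorm_nonneg (h : RIP Φ k δ) {x : Fin N → ℝ} (hx : sparse k x) :
    0 ≤ δ * _root_.enorm x := by
  have := (abs_nonneg _).trans (h.abs_dotProduct_mulVec_self_sub_le hx)
  rw [← enorm_sq_eq_dotProduct_self, sq, ← mul_assoc] at this
  rcases (enorm_nonneg x).eq_or_lt with hzero | hpos
  · rw [← hzero, mul_zero]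
  · exact nonneg_of_mul_nonneg_left this hpos

lemma enorm_mulVec_le (h : RIP Φ k δ) {x : Fin N → ℝ} (hx : sparse k x) :
    _root_.enorm (Φ *ᵥ x) ≤ Real.sqrt (1 + δ) * _root_.enorm x := by
  rw [← Real.sqrt_sq (enorm_nonneg (Φ *ᵥ x)), ← Real.sqrt_sq (enorm_nonneg x),
    ← Real.sqrt_mul' _ (sq_nonneg _)]
  exact Real.sqrt_le_sqrt (h x hx).2

lemma abs_dotProduct_mulVec_sub_le_half (h : RIP Φ k δ) {U : Finset (Fin N)} (hU : U.card ≤ k)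
    {u x : Fin N → ℝ} (hu : ∀ i ∉ U, u i = 0) (hx : ∀ i ∉ U, x i = 0) :
    |Φ *ᵥ u ⬝ᵥ Φ *ᵥ x - u ⬝ᵥ x| ≤ δ / 2 * (u ⬝ᵥ u + x ⬝ᵥ x) := by
  have hadd := h.abs_dotProduct_mulVec_self_sub_le (x := u + x)
    ⟨U, hU, fun i hi => by simp [hu i hi, hx i hi]⟩
  have hsub := h.abs_dotProduct_mulVec_self_sub_le (x := u - x)
    ⟨U, hU, fun i hi => by simp [hu i hi, hx i hi]⟩
  simp only [mulVec_add, mulVec_sub, dotProduct_add, add_dotProduct, dotProduct_sub,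
    sub_dotProduct, dotProduct_comm x u, dotProduct_comm (Φ *ᵥ x) (Φ *ᵥ u)] at hadd hsub
  rw [abs_le] at hadd hsub ⊢
  constructor <;> linarith [hadd.1, hadd.2, hsub.1, hsub.2]

lemma abs_dotProduct_mulVec_sub_le (h : RIP Φ k δ) {U : Finset (Fin N)} (hU : U.card ≤ k)
    {u x : Fin N → ℝ} (hu : ∀ i ∉ U, u i = 0) (hx : ∀ i ∉ U, x i = 0) :
    |Φ *ᵥ u ⬝ᵥ Φ *ᵥ x - u ⬝ᵥ x| ≤ δ * _root_.enorm u * _root_.enorm x := by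
  rcases eq_or_ne u 0 with rfl | hu0
  · simp [_root_.enorm]
  rcases eq_or_ne x 0 with rfl | hx0
  · simp [_root_.enorm]
  set a := _root_.enorm u
  set b := _root_.enorm x
  have hab : 0 < a * b := mul_pos (enorm_pos_of_ne_zero hu0) (enorm_pos_of_ne_zero hx0)
  -- rescaling to equal norms turns the bound `δ/2 (‖u‖² + ‖x‖²)` into `δ ‖u‖ ‖x‖`
  have hscaled := h.abs_dotProduct_mulVec_sub_le_half hU (u := b • u) (x := a • x)
    (fun i hi => by simp [hu i hi]) (fun i hi => by simp [hx i hi])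
  simp only [mulVec_smul, dotProduct_smul, smul_dotProduct, smul_eq_mul,
    ← enorm_sq_eq_dotProduct_self] at hscaled
  rw [← mul_sub, ← mul_sub, ← mul_assoc, abs_mul, abs_of_pos (by positivity)] at hscaled
  refine le_of_mul_le_mul_left ?_ (mul_pos hab hab)
  nlinarith [hscaled]

end RIP

lemma le_of_sq_le_mul {a b : ℝ} (hb : 0 ≤ b) (h : a ^ 2 ≤ a * b) : a ≤ b := by
  nlinarith

theorem stmt7_general {m N : ℕ} (Φ : Matrix (Fin m) (Fin N) ℝ) (s t : ℕ) (δst δt : ℝ)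
    (hst : RIP Φ (s+t) δst) (ht : RIP Φ t δt)
    (S T : Finset (Fin N)) (hS : S.card = s) (hT : T.card = t)
    (xS : Fin N → ℝ) (hxS : ∀ i ∉ S, xS i = 0)
    (e' y : Fin m → ℝ) (hy : y = fun i => Φ.mulVec xS i + e' i)
    (zp : Fin N → ℝ) (hzp : ∀ i ∉ T, zp i = 0)
    (hmin : ∀ z : Fin N → ℝ, (∀ i ∉ T, z i = 0) →
      _root_.enorm (fun i => y i - Φ.mulVec zp i) ≤ _root_.enorm (fun i => y i - Φ.mulVec z i)) :
    _root_.enorm (restrict T (fun i => xS i - zp i)) ≤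
      δst * _root_.enorm (fun i => xS i - zp i) + Real.sqrt (1+δt) * _root_.enorm e' := by
  set w : Fin N → ℝ := fun i => xS i - zp i
  set v := _root_.restrict T w
  have hvT : ∀ i ∉ T, v i = 0 := fun i hi => if_neg hi
  have hwST : ∀ i ∉ S ∪ T, w i = 0 := fun i hi => by
    rw [Finset.mem_union, not_or] at hi
    simp [w, hxS i hi.1, hzp i hi.2]
  have hvST : ∀ i ∉ S ∪ T, v i = 0 := fun i hi =>
    hvT i fun hiT => hi (Finset.mem_union_right S hiT)
  have hcard : (S ∪ T).card ≤ s + t := hS ▸ hT ▸ Finset.card_union_le S T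
  have hresidual : (fun i => y i - (Φ *ᵥ zp) i) = Φ *ᵥ w + e' := by
    ext i
    simp only [hy, show w = xS - zp from rfl, mulVec_sub, Pi.add_apply, Pi.sub_apply]
    ring
  have horth : Φ *ᵥ v ⬝ᵥ (Φ *ᵥ w + e') = 0 := by
    rw [← hresidual]
    refine dotProduct_eq_zero_of_forall_enorm_le fun ε => ?_
    convert hmin (zp + ε • v) (fun i hi => by simp [hzp i hi, hvT i hi]) using 2
    ext i
    simp only [Pi.sub_apply, Pi.smul_apply, smul_eq_mul, mulVec_add, mulVec_smul, Pi.add_apply]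
    ring
  have hkey : _root_.enorm v ^ 2 ≤
      _root_.enorm v * (δst * _root_.enorm w + Real.sqrt (1 + δt) * _root_.enorm e') := by
    calc _root_.enorm v ^ 2 = (v ⬝ᵥ w - Φ *ᵥ v ⬝ᵥ Φ *ᵥ w) + -(Φ *ᵥ v ⬝ᵥ e') := by
          rw [enorm_sq_eq_dotProduct_self, restrict_dotProduct_restrict]
          rw [dotProduct_add] at horth
          linarith
      _ ≤ δst * _root_.enorm v * _root_.enorm w + _root_.enorm (Φ *ᵥ v) * _root_.enorm e' := by
          gcongr
          · exact (le_abs_self _).trans <| (abs_sub_comm _ _).trans_le <|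
              hst.abs_dotProduct_mulVec_sub_le hcard hvST hwST
          · exact (neg_le_abs _).trans (abs_dotProduct_le_enorm_mul_enorm _ _)
      _ ≤ δst * _root_.enorm v * _root_.enorm w +
          Real.sqrt (1 + δt) * _root_.enorm v * _root_.enorm e' := by
          gcongr
          · exact enorm_nonneg e'
          · exact ht.enorm_mulVec_le ⟨T, hT.le, hvT⟩
      _ = _ := by ring
  exact le_of_sq_le_mul (add_nonneg (hst.mul_enorm_nonneg ⟨S ∪ T, hcard, hwST⟩)
    (mul_nonneg (Real.sqrt_nonneg _) (enorm_nonneg e'))) hkey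

theorem stmt7 {m N : ℕ} (Φ : Matrix (Fin m) (Fin N) ℝ) (s t : ℕ) (δst δt : ℝ)
    (hst : RIP Φ (s+t) δst) (ht : RIP Φ t δt) (hδ : δst < 1)
    (S T : Finset (Fin N)) (hS : S.card = s) (hT : T.card = t)
    (xS : Fin N → ℝ) (hxS : ∀ i ∉ S, xS i = 0)
    (e' y : Fin m → ℝ) (hy : y = fun i => Φ.mulVec xS i + e' i)
    (zp : Fin N → ℝ) (hzp : ∀ i ∉ T, zp i = 0)
    (hmin : ∀ z : Fin N → ℝ, (∀ i ∉ T, z i = 0) →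
      _root_.enorm (fun i => y i - Φ.mulVec zp i) ≤ _root_.enorm (fun i => y i - Φ.mulVec z i)) :
    _root_.enorm (restrict T (fun i => xS i - zp i)) ≤
      δst * _root_.enorm (fun i => xS i - zp i) + Real.sqrt (1+δt) * _root_.enorm e' :=
  stmt7_general Φ s t δst δt hst ht S T hS hT xS hxS e' y hy zp hzp hmin
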